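/- Let $W \subseteq \mathrm{Hom}(U,V)$ be a linear subspace of linear maps between finite-dimensional vector spaces over an algebraically closed field, with $\dim U = r \geq 2$ and $\dim V = s \geq 2$, such that for every nonzero $u \in U$ the evaluation map $f \mapsto f(u)$ from $W$ to $V$ is surjective. Then $\dim W \geq r + s - 1$, i.e., $t \geq r + s - 1$. -/

import Mathlib

/-!
Choosing bases, the maps in a basis of `W` become `t` bilinear forms `gᵢ(x, y)` on
`k^r × k^s`, and transitivity says that they have no common zero with `x ≠ 0` and `y ≠ 0`.
By the Nullstellensatz the ideal `(g)` then contains `((x)(y))^N` for some `N`. Consequently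
every polynomial of bidegree `(L, L)` is a combination of the products `xᵃ yᵇ gᵅ` with
`|a| = |b| = j ≤ N` and `|α| = L - j`. There are `O(L^(t-1))` such products, while the
monomials of bidegree `(L, L)` number at least of order `L^(r+s-2)`; hence `t - 1 ≥ r + s - 2`.
-/

open Module MvPolynomial Finset Finset.Nat

namespace MvPolynomial

variable {σ ι κ R : Type*} [CommSemiring R]

section Weighted

variable {M : Type*} [AddCommMonoid M]

theorem IsWeightedHomogeneous.mem_of_monomial_mem {w : σ → M} {m : M}
    {f : MvPolynomial σ R} (hf : f.IsWeightedHomogeneous w m) {S : Submodule R (MvPolynomial σ R)}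
    (hS : ∀ d, Finsupp.weight w d = m → monomial d 1 ∈ S) : f ∈ S := by
  rw [f.as_sum]
  refine S.sum_mem fun d hd => ?_
  rw [← mul_one (coeff d f), ← smul_eq_mul, ← smul_monomial]
  exact S.smul_mem _ (hS d (hf (mem_support_iff.mp hd)))

variable [PartialOrder M] [CanonicallyOrderedAdd M] [Sub M] [OrderedSub M] [AddLeftReflectLE M]

attribute [local instance] weightedGradedAlgebra in
theorem IsWeightedHomogeneous.weightedHomogeneousComponent_add_mul {w : σ → M}
    {g : MvPolynomial σ R} {n : M} (hg : g.IsWeightedHomogeneous w n)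
    (c : MvPolynomial σ R) (m : M) :
    weightedHomogeneousComponent w (m + n) (c * g) = weightedHomogeneousComponent w m c * g := by
  classical
  have := DirectSum.coe_decompose_mul_of_right_mem_of_le (weightedHomogeneousSubmodule R w)
    (a := c) hg (le_add_self : n ≤ m + n)
  rw [add_tsub_cancel_right] at this
  simpa [← weightedDecomposition.decompose'_apply] using this

theorem IsWeightedHomogeneous.exists_sum_mul_eq_of_mem_span {τ : Type*} [Fintype τ]
    {w : σ → M} {g : τ → MvPolynomial σ R} {m n : M}
    (hg : ∀ i, (g i).IsWeightedHomogeneous w n) {f : MvPolynomial σ R}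
    (hf : f.IsWeightedHomogeneous w (m + n)) (hfg : f ∈ Ideal.span (Set.range g)) :
    ∃ c : τ → MvPolynomial σ R,
      (∀ i, (c i).IsWeightedHomogeneous w m) ∧ ∑ i, c i * g i = f := by
  obtain ⟨c, rfl⟩ := Ideal.mem_span_range_iff_exists_fun.mp hfg
  refine ⟨fun i => weightedHomogeneousComponent w m (c i),
    fun i => weightedHomogeneousComponent_isWeightedHomogeneous _ _, ?_⟩
  simp only [← (hg _).weightedHomogeneousComponent_add_mul]
  rw [← map_sum, hf.weightedHomogeneousComponent_same]

end Weighted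

def biWeight (ι κ : Type*) : ι ⊕ κ → ℕ × ℕ :=
  Sum.elim (fun _ => (1, 0)) (fun _ => (0, 1))

theorem weight_biWeight [Fintype ι] [Fintype κ] (d : ι ⊕ κ →₀ ℕ) :
    Finsupp.weight (biWeight ι κ) d = (∑ i, d (Sum.inl i), ∑ j, d (Sum.inr j)) := by
  rw [Finsupp.weight_apply, Finsupp.sum_fintype _ _ (by simp), Fintype.sum_sum_type]
  ext <;> simp [biWeight, Prod.fst_sum, Prod.snd_sum]

theorem isWeightedHomogeneous_X_inl_mul_X_inr (i : ι) (j : κ) :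
    (X (Sum.inl i) * X (Sum.inr j) : MvPolynomial (ι ⊕ κ) R).IsWeightedHomogeneous
      (biWeight ι κ) (1, 1) :=
  (isWeightedHomogeneous_X R _ _).mul (isWeightedHomogeneous_X R _ _)

variable (ι κ R) in
noncomputable def bigradedIrrelevant : Ideal (MvPolynomial (ι ⊕ κ) R) :=
  Ideal.span (Set.range fun i => X (Sum.inl i)) * Ideal.span (Set.range fun j => X (Sum.inr j))

theorem monomial_one_eq_prod_mul_prod [Fintype ι] [Fintype κ] (d : ι ⊕ κ →₀ ℕ) :
    monomial d (1 : R) =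
      (∏ i, X (Sum.inl i) ^ d (Sum.inl i)) * ∏ j, X (Sum.inr j) ^ d (Sum.inr j) := by
  rw [monomial_eq, C_1, one_mul, Finsupp.prod_fintype _ _ (by simp), Fintype.prod_sum_type]

theorem prod_X_pow_mem_span_X_pow {ν : Type*} [Fintype ν] (e : ν → σ) (a : ν → ℕ) :
    ∏ i, X (e i) ^ a i ∈
      Ideal.span (Set.range fun i => (X (e i) : MvPolynomial σ R)) ^ ∑ i, a i := by
  rw [← prod_pow_eq_pow_sum]
  exact Ideal.prod_mem_prod fun i _ =>
    Ideal.pow_mem_pow (Ideal.subset_span (Set.mem_range_self i)) _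

theorem IsWeightedHomogeneous.mem_bigradedIrrelevant_pow [Fintype ι] [Fintype κ]
    {f : MvPolynomial (ι ⊕ κ) R} {n : ℕ}
    (hf : f.IsWeightedHomogeneous (biWeight ι κ) (n, n)) :
    f ∈ bigradedIrrelevant ι κ R ^ n := by
  refine hf.mem_of_monomial_mem (S := (bigradedIrrelevant ι κ R ^ n).restrictScalars R) ?_
  intro d hd
  obtain ⟨hx, hy⟩ := Prod.mk.inj ((weight_biWeight d).symm.trans hd)
  have := Ideal.mul_mem_mul (prod_X_pow_mem_span_X_pow Sum.inl fun i => d (Sum.inl i))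
    (prod_X_pow_mem_span_X_pow (R := R) Sum.inr fun j => d (Sum.inr j))
  rw [hx, hy, ← mul_pow] at this
  rwa [Submodule.restrictScalars_mem, monomial_one_eq_prod_mul_prod]

theorem exists_bigradedIrrelevant_pow_le_span {k : Type*} [Field k] [IsAlgClosed k]
    [Finite ι] [Finite κ] {τ : Type*} (g : τ → MvPolynomial (ι ⊕ κ) k)
    (hg : ∀ x : ι ⊕ κ → k,
      (∀ i, aeval x (g i) = 0) → x ∘ Sum.inl = 0 ∨ x ∘ Sum.inr = 0) :
    ∃ N, bigradedIrrelevant ι κ k ^ N ≤ Ideal.span (Set.range g) := by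
  refine Ideal.exists_pow_le_of_le_radical_of_fg ?_ (IsNoetherian.noetherian _)
  rw [← vanishingIdeal_zeroLocus_eq_radical (K := k), zeroLocus_span]
  intro f hf x hx
  rw [bigradedIrrelevant] at hf
  rcases hg x fun i => hx _ (Set.mem_range_self i) with h | h
  · refine RingHom.mem_ker.mp (Ideal.mul_le_left.trans ?_ hf)
    exact Ideal.span_le.mpr <| Set.range_subset_iff.mpr fun i => by simpa using congrFun h i
  · refine RingHom.mem_ker.mp (Ideal.mul_le_right.trans ?_ hf)
    exact Ideal.span_le.mpr <| Set.range_subset_iff.mpr fun j => by simpa using congrFun h j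

end MvPolynomial

section BilinPoly

variable {k U V ι κ : Type*} [Field k] [AddCommGroup U] [Module k U] [AddCommGroup V]
  [Module k V] [Fintype ι] [Fintype κ]

noncomputable def bilinPoly (bU : Basis ι k U) (bV : Basis κ k V) :
    (U →ₗ[k] V) →ₗ[k] MvPolynomial (ι ⊕ κ) k :=
  ∑ i, ∑ j,
    (bV.coord j ∘ₗ LinearMap.applyₗ (bU i)).smulRight (X (Sum.inl i) * X (Sum.inr j))

variable (bU : Basis ι k U) (bV : Basis κ k V)

theorem isWeightedHomogeneous_bilinPoly (f : U →ₗ[k] V) :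
    (bilinPoly bU bV f).IsWeightedHomogeneous (biWeight ι κ) (1, 1) := by
  simp only [bilinPoly, LinearMap.sum_apply, LinearMap.smulRight_apply, smul_eq_C_mul]
  exact .sum _ _ _ fun i _ => .sum _ _ _ fun j _ =>
    (isWeightedHomogeneous_X_inl_mul_X_inr i j).C_mul _

theorem aeval_bilinPoly (f : U →ₗ[k] V) (x : ι ⊕ κ → k) :
    aeval x (bilinPoly bU bV f) =
      (x ∘ Sum.inr) ⬝ᵥ bV.equivFun (f (bU.equivFun.symm (x ∘ Sum.inl))) := by
  simp only [bilinPoly, LinearMap.coe_sum, LinearMap.coe_smulRight, LinearMap.coe_comp,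
    Function.comp_apply, LinearMap.applyₗ_apply_apply, Basis.coord_apply, Finset.sum_apply,
    map_sum, map_smul, aeval_eq_eval, map_mul, eval_X, smul_eq_mul, dotProduct,
    Basis.equivFun_symm_apply, Basis.equivFun_apply, Pi.smul_apply, mul_sum]
  rw [Finset.sum_comm]
  refine Finset.sum_congr rfl fun j _ => Finset.sum_congr rfl fun i _ => by ring

theorem eq_zero_or_eq_zero_of_forall_aeval_bilinPoly_eq_zero {W : Submodule k (U →ₗ[k] V)}
    (htrans : ∀ u : U, u ≠ 0 → ∀ v : V, ∃ f ∈ W, f u = v)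
    {τ : Type*} (b : Basis τ k W) (x : ι ⊕ κ → k) (hx : ∀ i, aeval x (bilinPoly bU bV (b i)) = 0) :
    x ∘ Sum.inl = 0 ∨ x ∘ Sum.inr = 0 := by
  classical
  by_contra! h
  obtain ⟨j, hj⟩ := Function.ne_iff.mp h.2
  obtain ⟨f, hfW, hfu⟩ := htrans _ (bU.equivFun.symm.map_ne_zero_iff.mpr h.1) (bV j)
  have hW : (aeval x).toLinearMap ∘ₗ bilinPoly bU bV ∘ₗ W.subtype = 0 := b.ext fun i => hx i
  have := LinearMap.congr_fun hW ⟨f, hfW⟩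
  simp only [LinearMap.comp_apply, Submodule.subtype_apply, AlgHom.toLinearMap_apply,
    LinearMap.zero_apply, aeval_bilinPoly, hfu, bV.equivFun_apply, bV.repr_self,
    Finsupp.single_eq_pi_single, dotProduct_single, mul_one] at this
  exact hj this

end BilinPoly

namespace Finset.Nat

theorem card_antidiagonalTuple_le (n L : ℕ) : #(antidiagonalTuple n L) ≤ (L + 1) ^ (n - 1) := by
  cases n with
  | zero => exact card_le_one.mpr fun a _ b _ => Subsingleton.elim a b
  | succ n =>
    calc #(antidiagonalTuple (n + 1) L)
        ≤ #(Fintype.piFinset fun _ : Fin n => range (L + 1)) := by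
          refine card_le_card_of_injOn Fin.tail (fun x hx => ?_) fun x hx y hy hxy => ?_
          · rw [mem_coe, mem_antidiagonalTuple] at hx
            simp only [Fintype.coe_piFinset, Set.mem_pi, Set.mem_univ, coe_range, Set.mem_Iio,
              forall_const]
            intro i
            have := single_le_sum (fun j _ => Nat.zero_le (x j)) (mem_univ i.succ)
            simp only [Fin.tail]
            omega
          · rw [mem_coe, mem_antidiagonalTuple, Fin.sum_univ_succ] at hx hy
            rw [← Fin.cons_self_tail x, ← Fin.cons_self_tail y, hxy]
            have : ∑ i : Fin n, x i.succ = ∑ i : Fin n, y i.succ :=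
              congrArg (fun z : Fin n → ℕ => ∑ i, z i) hxy
            congr 1
            omega
      _ = (L + 1) ^ (n + 1 - 1) := by simp

theorem pow_le_card_antidiagonalTuple {n m L : ℕ} (h : n * m ≤ L) :
    (m + 1) ^ n ≤ #(antidiagonalTuple (n + 1) L) := by
  calc (m + 1) ^ n = #(Fintype.piFinset fun _ : Fin n => range (m + 1)) := by simp
    _ ≤ #(antidiagonalTuple (n + 1) L) := by
      refine card_le_card_of_injOn (fun c => Fin.cons (L - ∑ i, c i) c) (fun c hc => ?_)
        fun c _ c' _ hcc' => ?_
      · simp only [Fintype.coe_piFinset, Set.mem_pi, Set.mem_univ, coe_range, Set.mem_Iio,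
          forall_const] at hc
        have : ∑ i, c i ≤ n * m := by
          simpa using sum_le_sum fun i (_ : i ∈ univ) => Nat.le_of_lt_succ (hc i)
        rw [mem_coe, mem_antidiagonalTuple, Fin.sum_cons]
        omega
      · simpa using congrArg Fin.tail hcc'

end Finset.Nat

section Counting

variable {k : Type*} [Field k] {r s t : ℕ}

noncomputable def bimonomial (a : Fin r → ℕ) (b : Fin s → ℕ) :
    MvPolynomial (Fin r ⊕ Fin s) k :=
  monomial (Finsupp.equivFunOnFinite.symm (Sum.elim a b)) 1

theorem isWeightedHomogeneous_bimonomial {a : Fin r → ℕ} {b : Fin s → ℕ} {L : ℕ}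
    (ha : a ∈ antidiagonalTuple r L) (hb : b ∈ antidiagonalTuple s L) :
    (bimonomial a b : MvPolynomial (Fin r ⊕ Fin s) k).IsWeightedHomogeneous
      (biWeight (Fin r) (Fin s)) (L, L) := by
  rw [mem_antidiagonalTuple] at ha hb
  exact isWeightedHomogeneous_monomial _ _ _ (by simp [weight_biWeight, ha, hb])

theorem linearIndependent_bimonomial :
    LinearIndependent k fun ab : (Fin r → ℕ) × (Fin s → ℕ) =>
      (bimonomial ab.1 ab.2 : MvPolynomial (Fin r ⊕ Fin s) k) := by
  have hinj : Function.Injective fun ab : (Fin r → ℕ) × (Fin s → ℕ) =>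
      Finsupp.equivFunOnFinite.symm (Sum.elim ab.1 ab.2) := fun ab ab' h =>
    Prod.ext (funext fun i => by simpa using DFunLike.congr_fun h (Sum.inl i))
      (funext fun j => by simpa using DFunLike.congr_fun h (Sum.inr j))
  have := (basisMonomials _ k).linearIndependent.comp _ hinj
  rw [coe_basisMonomials] at this
  exact this

def productIndex (r s t N L : ℕ) :
    Finset ((Fin r → ℕ) × (Fin s → ℕ) × (Fin t → ℕ)) :=
  ((range (N + 1)).filter (· ≤ L)).biUnion fun j =>
    antidiagonalTuple r j ×ˢ antidiagonalTuple s j ×ˢ antidiagonalTuple t (L - j)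

theorem mem_productIndex {N L : ℕ} {a : Fin r → ℕ} {b : Fin s → ℕ} {α : Fin t → ℕ} :
    (a, b, α) ∈ productIndex r s t N L ↔ ∃ j ≤ N, j ≤ L ∧
      a ∈ antidiagonalTuple r j ∧ b ∈ antidiagonalTuple s j ∧
        α ∈ antidiagonalTuple t (L - j) := by
  simp [productIndex, and_assoc]

theorem add_single_mem_productIndex {N L : ℕ}
    {a : Fin r → ℕ} {b : Fin s → ℕ} {α : Fin t → ℕ}
    (h : (a, b, α) ∈ productIndex r s t N L) (i : Fin t) :
    (a, b, α + Pi.single i 1) ∈ productIndex r s t N (L + 1) := by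
  obtain ⟨j, hjN, hjL, ha, hb, hα⟩ := mem_productIndex.mp h
  rw [mem_antidiagonalTuple] at hα
  refine mem_productIndex.mpr ⟨j, hjN, by omega, ha, hb, ?_⟩
  simp only [mem_antidiagonalTuple, Pi.add_apply, sum_add_distrib, hα, sum_pi_single',
    mem_univ, ↓reduceIte]
  omega

noncomputable def productFamily (g : Fin t → MvPolynomial (Fin r ⊕ Fin s) k)
    (abα : (Fin r → ℕ) × (Fin s → ℕ) × (Fin t → ℕ)) :
    MvPolynomial (Fin r ⊕ Fin s) k :=
  bimonomial abα.1 abα.2.1 * ∏ i, g i ^ abα.2.2 i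

theorem productFamily_add_single (g : Fin t → MvPolynomial (Fin r ⊕ Fin s) k)
    (a : Fin r → ℕ) (b : Fin s → ℕ) (α : Fin t → ℕ) (i : Fin t) :
    productFamily g (a, b, α + Pi.single i 1) = productFamily g (a, b, α) * g i := by
  have : ∏ j, g j ^ Pi.single i 1 j = g i := by
    rw [prod_eq_single i (fun j _ hj => by simp [hj]) (by simp)]
    simp
  simp [productFamily, pow_add, prod_mul_distrib, mul_assoc, this]

noncomputable def productSpan (g : Fin t → MvPolynomial (Fin r ⊕ Fin s) k) (N L : ℕ) :
    Submodule k (MvPolynomial (Fin r ⊕ Fin s) k) :=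
  Submodule.span k (productFamily g '' productIndex r s t N L)

theorem card_productIndex_le (N L : ℕ) :
    #(productIndex r s t N L) ≤ (N + 1) ^ (r + s + 1) * (L + 1) ^ (t - 1) := by
  calc #(productIndex r s t N L)
      ≤ ∑ j ∈ (range (N + 1)).filter (· ≤ L),
          (N + 1) ^ r * (N + 1) ^ s * (L + 1) ^ (t - 1) := by
        refine card_biUnion_le.trans (sum_le_sum fun j hj => ?_)
        rw [mem_filter, mem_range] at hj
        rw [card_product, card_product, ← mul_assoc]
        gcongr ?_ * ?_ * ?_
        · exact (card_antidiagonalTuple_le r j).trans <|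
            (Nat.pow_le_pow_left (by omega) _).trans (Nat.pow_le_pow_right (by omega) (by omega))
        · exact (card_antidiagonalTuple_le s j).trans <|
            (Nat.pow_le_pow_left (by omega) _).trans (Nat.pow_le_pow_right (by omega) (by omega))
        · exact (card_antidiagonalTuple_le t _).trans (Nat.pow_le_pow_left (by omega) _)
    _ ≤ (N + 1) * ((N + 1) ^ r * (N + 1) ^ s * (L + 1) ^ (t - 1)) := by
        rw [sum_const, smul_eq_mul]
        exact Nat.mul_le_mul_right _ ((card_filter_le _ _).trans (card_range _).le)
    _ = (N + 1) ^ (r + s + 1) * (L + 1) ^ (t - 1) := by ring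

variable (g : Fin t → MvPolynomial (Fin r ⊕ Fin s) k)

theorem mul_mem_productSpan {N L : ℕ} {f : MvPolynomial (Fin r ⊕ Fin s) k}
    (hf : f ∈ productSpan g N L) (i : Fin t) : f * g i ∈ productSpan g N (L + 1) := by
  have : (productSpan g N L).map (LinearMap.mulRight k (g i)) ≤ productSpan g N (L + 1) := by
    rw [productSpan, Submodule.map_span, Submodule.span_le]
    rintro _ ⟨_, ⟨⟨a, b, α⟩, hx, rfl⟩, rfl⟩
    exact Submodule.subset_span
      ⟨_, add_single_mem_productIndex hx i, productFamily_add_single g a b α i⟩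
  exact this ⟨f, hf, rfl⟩

variable {g}

theorem mem_productSpan {N : ℕ}
    (hg : ∀ i, (g i).IsWeightedHomogeneous (biWeight (Fin r) (Fin s)) (1, 1))
    (hN : bigradedIrrelevant (Fin r) (Fin s) k ^ N ≤ Ideal.span (Set.range g)) (L : ℕ)
    {f : MvPolynomial (Fin r ⊕ Fin s) k} (hf : f.IsWeightedHomogeneous (biWeight _ _) (L, L)) :
    f ∈ productSpan g N L := by
  induction L using Nat.strong_induction_on generalizing f with
  | _ L IH =>
  rcases le_or_gt L N with hLN | hNL
  · refine hf.mem_of_monomial_mem fun d hd => Submodule.subset_span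
      ⟨(d ∘ Sum.inl, d ∘ Sum.inr, 0), ?_, ?_⟩
    · obtain ⟨hx, hy⟩ := Prod.mk.inj ((weight_biWeight d).symm.trans hd)
      exact mem_productIndex.mpr ⟨L, hLN, le_rfl, mem_antidiagonalTuple.mpr hx,
        mem_antidiagonalTuple.mpr hy, by simp [mem_antidiagonalTuple]⟩
    · simp [productFamily, bimonomial]
  · obtain ⟨L, rfl⟩ := Nat.exists_eq_add_of_le' (Nat.one_le_of_lt hNL)
    obtain ⟨c, hc, rfl⟩ := hf.exists_sum_mul_eq_of_mem_span (m := (L, L)) hg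
      (hN.trans' (Ideal.pow_le_pow_right hNL.le) hf.mem_bigradedIrrelevant_pow)
    exact Submodule.sum_mem _ fun i _ =>
      mul_mem_productSpan g (IH L (by omega) (hc i)) i

theorem card_mul_card_antidiagonalTuple_le {N : ℕ}
    (hg : ∀ i, (g i).IsWeightedHomogeneous (biWeight (Fin r) (Fin s)) (1, 1))
    (hN : bigradedIrrelevant (Fin r) (Fin s) k ^ N ≤ Ideal.span (Set.range g)) (L : ℕ) :
    #(antidiagonalTuple r L) * #(antidiagonalTuple s L) ≤ #(productIndex r s t N L) := by
  classical
  rw [← card_product, ← Fintype.card_coe]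
  have hli := (linearIndependent_bimonomial (k := k)).comp _
    (Subtype.val_injective (p := (· ∈ antidiagonalTuple r L ×ˢ antidiagonalTuple s L)))
  refine (linearIndependent_le_span_aux' _ hli
    ((productIndex r s t N L).image (productFamily g) : Set _) ?_).trans ?_
  · rintro _ ⟨⟨⟨a, b⟩, hab⟩, rfl⟩
    rw [mem_product] at hab
    rw [coe_image]
    exact mem_productSpan hg hN L (isWeightedHomogeneous_bimonomial hab.1 hab.2)
  · simpa using card_image_le

theorem lt_of_bigradedIrrelevant_pow_le_span {u v N : ℕ} (huv : 0 < u + v)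
    {g : Fin t → MvPolynomial (Fin (u + 1) ⊕ Fin (v + 1)) k}
    (hg : ∀ i, (g i).IsWeightedHomogeneous (biWeight _ _) (1, 1))
    (hN : bigradedIrrelevant _ _ k ^ N ≤ Ideal.span (Set.range g)) : u + v < t := by
  by_contra! ht
  set n := u + v
  set W := (N + 1) ^ (n + 3) * n ^ (n - 1)
  have hcount := (card_mul_card_antidiagonalTuple_le hg hN (n * W)).trans
    (card_productIndex_le N (n * W))
  have hlow : (W + 1) ^ n ≤ (N + 1) ^ (n + 3) * (n * W + 1) ^ (t - 1) := by
    calc (W + 1) ^ n = (W + 1) ^ u * (W + 1) ^ v := pow_add _ _ _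
      _ ≤ #(antidiagonalTuple (u + 1) (n * W)) * #(antidiagonalTuple (v + 1) (n * W)) :=
        Nat.mul_le_mul (pow_le_card_antidiagonalTuple (Nat.mul_le_mul_right _ (by omega)))
          (pow_le_card_antidiagonalTuple (Nat.mul_le_mul_right _ (by omega)))
      _ ≤ _ := hcount.trans_eq (by rw [show u + 1 + (v + 1) + 1 = n + 3 by omega])
  have hup : (N + 1) ^ (n + 3) * (n * W + 1) ^ (t - 1) ≤ W * (W + 1) ^ (n - 1) := by
    calc (N + 1) ^ (n + 3) * (n * W + 1) ^ (t - 1)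
        ≤ (N + 1) ^ (n + 3) * (n * W + 1) ^ (n - 1) := by gcongr; omega
      _ ≤ (N + 1) ^ (n + 3) * (n * (W + 1)) ^ (n - 1) := by
          gcongr
          nlinarith
      _ = W * (W + 1) ^ (n - 1) := by rw [mul_pow]; ring
  have hsucc : (W + 1) ^ n = (W + 1) ^ (n - 1) * (W + 1) := by
    rw [← pow_succ, Nat.sub_add_cancel huv]
  have hpos : 0 < (W + 1) ^ (n - 1) := by positivity
  nlinarith [hlow.trans hup]

end Counting

/-- If `W ⊆ Hom(U,V)` is a subspace of linear maps between finite-dimensional vector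
spaces over an algebraically closed field, with `dim U = r ≥ 2` and `dim V = s ≥ 2`,
such that for every nonzero `u ∈ U` the evaluation map `f ↦ f u` from `W` to `V` is
surjective, then `dim W ≥ r + s - 1`.  (A Steiner bundle on `ℙ^(r-1)` has rank at
least `r - 1`.) -/
theorem finrank_transitive_ge {k U V : Type*} [Field k] [IsAlgClosed k]
    [AddCommGroup U] [Module k U] [AddCommGroup V] [Module k V]
    [FiniteDimensional k U] [FiniteDimensional k V]
    (r s : ℕ) (hr : 2 ≤ r) (hs : 2 ≤ s)
    (hU : finrank k U = r) (hV : finrank k V = s)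
    (W : Submodule k (U →ₗ[k] V))
    (htrans : ∀ u : U, u ≠ 0 → ∀ v : V, ∃ f ∈ W, f u = v) :
    r + s - 1 ≤ finrank k W := by
  obtain ⟨u, rfl⟩ := Nat.exists_eq_add_of_le' (by omega : 1 ≤ r)
  obtain ⟨v, rfl⟩ := Nat.exists_eq_add_of_le' (by omega : 1 ≤ s)
  let bU := finBasisOfFinrankEq k U hU
  let bV := finBasisOfFinrankEq k V hV
  let b := finBasis k W
  obtain ⟨N, hN⟩ := exists_bigradedIrrelevant_pow_le_span (fun i => bilinPoly bU bV (b i))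
    (eq_zero_or_eq_zero_of_forall_aeval_bilinPoly_eq_zero bU bV htrans b)
  have := lt_of_bigradedIrrelevant_pow_le_span (by omega)
    (fun i => isWeightedHomogeneous_bilinPoly bU bV (b i)) hN
  omega
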